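/- Suppose the sequence of tuning parameters satisfies η_n → 0. For every sequence a_n of nonnegative real numbers, with E_{A,n} = [θ̃_A − σ̂ a_n, θ̃_A + σ̂ a_n] and C_{A,n} = [θ̂_A − a_n, θ̂_A + a_n], one has inf_{θ∈ℝ} P_{n,θ}(θ ∈ E_{A,n}) − inf_{θ∈ℝ} P_{n,θ}(θ ∈ C_{A,n}) → 0 as n → ∞. -/

import Mathlib

open MeasureTheory ProbabilityTheory Filter
open scoped NNReal

/-- Standard normal cumulative distribution function Φ. -/
noncomputable def stdNormCDF (x : ℝ) : ℝ :=
  ((gaussianReal 0 1) (Set.Iic x)).toReal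

/-- Soft-thresholding (LASSO) estimator with threshold η, as a function of ȳ. -/
noncomputable def softThresh (η y : ℝ) : ℝ := Real.sign y * max (|y| - η) 0

/-- Hard-thresholding estimator with threshold η, as a function of ȳ. -/
noncomputable def hardThresh (η y : ℝ) : ℝ := if η < |y| then y else 0

/-- Adaptive LASSO estimator with tuning parameter η, as a function of ȳ. -/
noncomputable def adaLasso (η y : ℝ) : ℝ := if |y| ≤ η then 0 else y - η ^ 2 / y

/-- Coverage probability `P_{n,θ}(θ ∈ [est(ȳ) - a, est(ȳ) + b])` in the
known-variance case (σ = 1), where ȳ ~ N(θ, 1/n). -/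
noncomputable def cover (n : ℕ) (est : ℝ → ℝ) (a b θ : ℝ) : ℝ :=
  ((gaussianReal θ ((n : ℝ≥0))⁻¹)
    {y : ℝ | est y - a ≤ θ ∧ θ ≤ est y + b}).toReal

/-- The distribution of `σ̂ = sqrt(Q/(n-1))` where `Q ~ χ²_{n-1}`; i.e. the law of the
square root of a chi-square random variable with `n-1` degrees of freedom divided by
`n - 1` (whose density is `h_n`). The chi-square distribution with `k` degrees of
freedom is the Gamma distribution with shape `k/2` and rate `1/2`. -/
noncomputable def sigmaHatLaw (n : ℕ) : Measure ℝ :=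
  (gammaMeasure (((n : ℝ) - 1) / 2) (1 / 2)).map
    (fun q => Real.sqrt (q / ((n : ℝ) - 1)))

/-- The cumulative distribution function `T_{n-1}` of the Student t-distribution with
`n-1` degrees of freedom, via `T_{n-1}(x) = ∫₀^∞ Φ(s x) h_n(s) ds`. -/
noncomputable def studentCDF (n : ℕ) (x : ℝ) : ℝ :=
  ∫ s, stdNormCDF (s * x) ∂(sigmaHatLaw n)

/-- Coverage probability `P_{n,θ}(θ ∈ [est(σ̂, ȳ) - σ̂ a, est(σ̂, ȳ) + σ̂ a])` in the
unknown-variance case (true σ = 1): `ȳ ~ N(θ, 1/n)` and `σ̂` (independent of `ȳ`) has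
law `sigmaHatLaw n`; here `est s y` is the feasible estimator computed from `ȳ = y` and
`σ̂ = s`. -/
noncomputable def coverUV (n : ℕ) (est : ℝ → ℝ → ℝ) (a θ : ℝ) : ℝ :=
  (((gaussianReal θ ((n : ℝ≥0))⁻¹).prod (sigmaHatLaw n))
    {p : ℝ × ℝ | est p.2 p.1 - p.2 * a ≤ θ ∧ θ ≤ est p.2 p.1 + p.2 * a}).toReal

/-!
After rescaling by `√n`, the known-variance coverage probability at `θ` is
`stdCover h α x = Φ(U_h(x + α) - x) - Φ(L_h(x - α) - x)` with `(h, α, x) = √n (η, a, θ)`, where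
`(-∞, U_h(t)]` and `[L_h(t), ∞)` are the preimages of `(-∞, t]` and `[t, ∞)` under the adaptive
LASSO map; the unknown-variance one is the average of `stdCover (s h) (s α) x` over `s ~ σ̂`.
By Chebyshev, `|σ̂ - 1| ≤ ε` up to probability `O(1 / (ε ^ 2 n))`.

If `a_n` is small, take `ε = M / √n`. Replacing `(h, α)` by `(s h, s α)` and shifting `x` by
`(1 - s) α` keeps `x - α` fixed and moves `stdCover` by `O(ε (α + h)) = O(M (a_n + η_n))`, because
`Φ` is `1/2`-Lipschitz and `U_h(t)` is `1`-Lipschitz in `(t, h)` on each half-line of `t`; and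
`stdCover h α` increases at most at rate `1/2` to the right of `-α`. Hence the two infima differ by
`O(M (a_n + η_n) + 1 / M ^ 2)`. If instead `a_n` stays away from `0`, both infima are at least
`2 Φ(√n (a_n - η_n) / 2) - 1 - O(1 / n) → 1`.
-/

open Set Topology
open scoped ENNReal

section StdNormCDF

instance : NullSingletonClass (gaussianReal 0 1) := nullSingletonClass_gaussianReal one_ne_zero

lemma stdNormCDF_eq_cdf : stdNormCDF = cdf (gaussianReal 0 1) := by
  ext x
  rw [cdf_eq_real]
  rfl

lemma monotone_stdNormCDF : Monotone stdNormCDF :=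
  stdNormCDF_eq_cdf ▸ monotone_cdf _

lemma stdNormCDF_nonneg (x : ℝ) : 0 ≤ stdNormCDF x :=
  stdNormCDF_eq_cdf ▸ cdf_nonneg _ x

lemma stdNormCDF_le_one (x : ℝ) : stdNormCDF x ≤ 1 :=
  stdNormCDF_eq_cdf ▸ cdf_le_one _ x

lemma tendsto_stdNormCDF_atTop : Tendsto stdNormCDF atTop (𝓝 1) :=
  stdNormCDF_eq_cdf ▸ tendsto_cdf_atTop _

lemma stdNormCDF_sub_stdNormCDF {a b : ℝ} (hab : a ≤ b) :
    stdNormCDF b - stdNormCDF a = (gaussianReal 0 1).real (Icc a b) := by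
  rw [measureReal_congr Ioc_ae_eq_Icc.symm, measureReal_def, ← measure_cdf (gaussianReal 0 1),
    StieltjesFunction.measure_Ioc, ENNReal.toReal_ofReal (sub_nonneg.2 (monotone_cdf _ hab)),
    stdNormCDF_eq_cdf]

lemma gaussianPDFReal_zero_one_le (x : ℝ) : gaussianPDFReal 0 1 x ≤ 1 / 2 := by
  have hπ : (2 : ℝ) ≤ √(2 * Real.pi) := by
    rw [Real.le_sqrt zero_le_two (by positivity)]
    linarith [Real.pi_gt_three]
  rw [gaussianPDFReal, NNReal.coe_one, mul_one]
  calc (√(2 * Real.pi))⁻¹ * Real.exp (-(x - 0) ^ 2 / (2 * 1)) ≤ 2⁻¹ * 1 := by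
        gcongr
        exact Real.exp_le_one_iff.2 (by nlinarith [sq_nonneg x])
    _ = 1 / 2 := by norm_num

lemma stdNormCDF_sub_le {a b : ℝ} (hab : a ≤ b) : stdNormCDF b - stdNormCDF a ≤ (b - a) / 2 := by
  rw [stdNormCDF_sub_stdNormCDF hab, measureReal_def,
    gaussianReal_apply_eq_integral _ one_ne_zero, ENNReal.toReal_ofReal
      (setIntegral_nonneg measurableSet_Icc fun x _ => gaussianPDFReal_nonneg 0 1 x)]
  calc ∫ x in Icc a b, gaussianPDFReal 0 1 x
      ≤ 1 / 2 * volume.real (Icc a b) := by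
        refine (le_abs_self _).trans (Real.norm_eq_abs _ ▸
          norm_setIntegral_le_of_norm_le_const measure_Icc_lt_top fun x _ => ?_)
        rw [Real.norm_of_nonneg (gaussianPDFReal_nonneg 0 1 x)]
        exact gaussianPDFReal_zero_one_le x
    _ = (b - a) / 2 := by rw [Real.volume_real_Icc_of_le hab]; ring

lemma stdNormCDF_sub_le_of_sub_le {a b d : ℝ} (hd : 0 ≤ d) (h : b - a ≤ d) :
    stdNormCDF b - stdNormCDF a ≤ d / 2 := by
  rcases le_total a b with hab | hab
  · linarith [stdNormCDF_sub_le hab]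
  · linarith [monotone_stdNormCDF hab]

lemma abs_stdNormCDF_sub_le (a b : ℝ) : |stdNormCDF b - stdNormCDF a| ≤ |b - a| / 2 :=
  abs_sub_le_iff.2 ⟨stdNormCDF_sub_le_of_sub_le (abs_nonneg _) (le_abs_self _),
    stdNormCDF_sub_le_of_sub_le (abs_nonneg _) (abs_sub_comm b a ▸ le_abs_self _)⟩

lemma abs_stdNormCDF_sub_sub_le (a b a' b' : ℝ) :
    |(stdNormCDF a - stdNormCDF b) - (stdNormCDF a' - stdNormCDF b')|
      ≤ (|a - a'| + |b - b'|) / 2 := by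
  have ha := abs_stdNormCDF_sub_le a' a
  have hb := abs_stdNormCDF_sub_le b' b
  calc |(stdNormCDF a - stdNormCDF b) - (stdNormCDF a' - stdNormCDF b')|
      = |(stdNormCDF a - stdNormCDF a') - (stdNormCDF b - stdNormCDF b')| := by ring_nf
    _ ≤ |stdNormCDF a - stdNormCDF a'| + |stdNormCDF b - stdNormCDF b'| := abs_sub _ _
    _ ≤ (|a - a'| + |b - b'|) / 2 := by linarith

lemma stdNormCDF_neg (x : ℝ) : stdNormCDF (-x) = 1 - stdNormCDF x := by
  have hneg : (gaussianReal 0 1).map (fun y => -y) = gaussianReal 0 1 := by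
    simpa using gaussianReal_map_neg (μ := 0) (v := 1)
  have hIci : (gaussianReal 0 1).real (Iic (-x)) = (gaussianReal 0 1).real (Ici x) := by
    conv_lhs => rw [← hneg]
    rw [map_measureReal_apply (by fun_prop) measurableSet_Iic]
    congr 1
    ext y
    simp
  rw [← compl_Iio, measureReal_compl measurableSet_Iio, measureReal_congr Iio_ae_eq_Iic] at hIci
  simp only [stdNormCDF, ← measureReal_def, hIci, probReal_univ]

end StdNormCDF

section Endpoints

/-- The largest `y` with `adaLasso h y ≤ t` (see `adaLasso_le_iff`): the root of
`y ^ 2 - t * y - h ^ 2` of the same sign as `t`. -/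
noncomputable def adaLassoUpper (h t : ℝ) : ℝ :=
  if 0 ≤ t then (t + √(t ^ 2 + 4 * h ^ 2)) / 2 else (t - √(t ^ 2 + 4 * h ^ 2)) / 2

noncomputable def adaLassoLower (h t : ℝ) : ℝ := -adaLassoUpper h (-t)

lemma sqrt_sq_add_four_mul_sq_eq_norm (h t : ℝ) : √(t ^ 2 + 4 * h ^ 2) = ‖(⟨t, 2 * h⟩ : ℂ)‖ := by
  rw [Complex.norm_eq_sqrt_sq_add_sq]
  ring_nf

lemma abs_le_sqrt_sq_add_four_mul_sq (h t : ℝ) : |t| ≤ √(t ^ 2 + 4 * h ^ 2) :=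
  Real.abs_le_sqrt (by nlinarith [sq_nonneg h])

lemma two_mul_le_sqrt_sq_add_four_mul_sq (h t : ℝ) : 2 * h ≤ √(t ^ 2 + 4 * h ^ 2) :=
  Real.le_sqrt_of_sq_le (by nlinarith [sq_nonneg t])

lemma abs_sqrt_sq_add_four_mul_sq_sub_le (h h' t t' : ℝ) :
    |√(t ^ 2 + 4 * h ^ 2) - √(t' ^ 2 + 4 * h' ^ 2)| ≤ |t - t'| + 2 * |h - h'| := by
  rw [sqrt_sq_add_four_mul_sq_eq_norm, sqrt_sq_add_four_mul_sq_eq_norm]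
  refine (abs_norm_sub_norm_le _ _).trans ((Complex.norm_le_abs_re_add_abs_im _).trans ?_)
  simp [← mul_sub, abs_mul]

lemma abs_adaLassoUpper_sub_le {h h' t t' : ℝ} (hsign : 0 ≤ t ↔ 0 ≤ t') :
    |adaLassoUpper h t - adaLassoUpper h' t'| ≤ |t - t'| + |h - h'| := by
  have hs := abs_sqrt_sq_add_four_mul_sq_sub_le h h' t t'
  unfold adaLassoUpper
  split_ifs with ht ht' ht' <;> try tauto
  all_goals
    have := abs_le.1 hs
    rw [abs_le]
    constructor <;> linarith [neg_abs_le (t - t'), le_abs_self (t - t'), abs_nonneg (h - h')]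

lemma adaLasso_neg (h y : ℝ) : adaLasso h (-y) = -adaLasso h y := by
  unfold adaLasso
  rw [abs_neg]
  split_ifs
  · simp
  · rw [div_neg]; ring

lemma adaLasso_le_iff {h : ℝ} (hh : 0 ≤ h) (t y : ℝ) :
    adaLasso h y ≤ t ↔ y ≤ adaLassoUpper h t := by
  have hts := abs_le.1 (abs_le_sqrt_sq_add_four_mul_sq h t)
  have hhs := two_mul_le_sqrt_sq_add_four_mul_sq h t
  have hs2 : √(t ^ 2 + 4 * h ^ 2) ^ 2 = t ^ 2 + 4 * h ^ 2 := Real.sq_sqrt (by positivity)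
  unfold adaLasso adaLassoUpper
  set s := √(t ^ 2 + 4 * h ^ 2)
  rcases le_or_gt |y| h with hy | hy
  · have := abs_le.1 hy
    rw [if_pos hy]
    split_ifs with ht
    · exact iff_of_true ht (by linarith)
    · exact iff_of_false (by linarith) (by nlinarith)
  rw [if_neg hy.not_ge]
  rw [sub_le_iff_le_add, ← sub_le_iff_le_add']
  rcases lt_abs.1 hy with hy | hy
  · rw [le_div_iff₀ (by linarith)]
    split_ifs <;> constructor <;> intro H <;> nlinarith
  · rw [le_div_iff_of_neg (by linarith)]
    split_ifs <;> constructor <;> intro H <;> nlinarith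

lemma le_adaLasso_iff {h : ℝ} (hh : 0 ≤ h) (t y : ℝ) :
    t ≤ adaLasso h y ↔ adaLassoLower h t ≤ y := by
  rw [adaLassoLower, neg_le, ← adaLasso_le_iff hh, adaLasso_neg, neg_le_neg_iff]

lemma abs_adaLasso_sub_le {h : ℝ} (hh : 0 ≤ h) (y : ℝ) : |adaLasso h y - y| ≤ h := by
  unfold adaLasso
  split_ifs with hy
  · rwa [zero_sub, abs_neg]
  · have hy0 : 0 < |y| := hh.trans_lt (not_le.1 hy)
    rw [sub_sub_cancel_left, abs_neg, abs_div, abs_sq, div_le_iff₀ hy0]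
    nlinarith

lemma sub_le_adaLassoUpper {h : ℝ} (hh : 0 ≤ h) (t : ℝ) : t - h ≤ adaLassoUpper h t :=
  (adaLasso_le_iff hh _ _).1 (by linarith [(abs_le.1 (abs_adaLasso_sub_le hh (t - h))).2])

lemma adaLassoLower_le_add {h : ℝ} (hh : 0 ≤ h) (t : ℝ) : adaLassoLower h t ≤ t + h :=
  (le_adaLasso_iff hh _ _).1 (by linarith [(abs_le.1 (abs_adaLasso_sub_le hh (t + h))).1])

lemma monotone_adaLassoLower {h : ℝ} (hh : 0 ≤ h) : Monotone (adaLassoLower h) :=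
  fun _ t₂ h12 => (le_adaLasso_iff hh _ _).1 (h12.trans ((le_adaLasso_iff hh t₂ _).2 le_rfl))

lemma adaLassoLower_le_adaLassoUpper {h t₁ t₂ : ℝ} (hh : 0 ≤ h) (h12 : t₁ ≤ t₂) :
    adaLassoLower h t₁ ≤ adaLassoUpper h t₂ := by
  by_contra! hlt
  obtain ⟨y, hUy, hyL⟩ := exists_between hlt
  have h1 := (adaLasso_le_iff hh t₂ y).not.2 hUy.not_ge
  have h2 := (le_adaLasso_iff hh t₁ y).not.2 hyL.not_ge
  linarith

lemma adaLassoUpper_mul {c : ℝ} (hc : 0 < c) (h t : ℝ) :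
    adaLassoUpper (c * h) (c * t) = c * adaLassoUpper h t := by
  have hs : √((c * t) ^ 2 + 4 * (c * h) ^ 2) = c * √(t ^ 2 + 4 * h ^ 2) := by
    rw [show (c * t) ^ 2 + 4 * (c * h) ^ 2 = c ^ 2 * (t ^ 2 + 4 * h ^ 2) by ring,
      Real.sqrt_mul (sq_nonneg c), Real.sqrt_sq hc.le]
  simp only [adaLassoUpper, hs, mul_nonneg_iff_of_pos_left hc]
  split_ifs <;> ring

lemma adaLassoLower_mul {c : ℝ} (hc : 0 < c) (h t : ℝ) :
    adaLassoLower (c * h) (c * t) = c * adaLassoLower h t := by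
  rw [adaLassoLower, adaLassoLower, ← mul_neg, adaLassoUpper_mul hc, mul_neg]

lemma abs_adaLassoLower_sub_le (h h' t : ℝ) :
    |adaLassoLower h t - adaLassoLower h' t| ≤ |h - h'| := by
  rw [adaLassoLower, adaLassoLower, neg_sub_neg, abs_sub_comm]
  simpa using abs_adaLassoUpper_sub_le (h := h) (h' := h') (t := -t) (t' := -t) Iff.rfl

lemma setOf_adaLasso_mem_eq_Icc {h : ℝ} (hh : 0 ≤ h) (θ a : ℝ) :
    {y | adaLasso h y - a ≤ θ ∧ θ ≤ adaLasso h y + a}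
      = Icc (adaLassoLower h (θ - a)) (adaLassoUpper h (θ + a)) := by
  ext y
  rw [mem_ofPred_eq, mem_Icc, ← le_adaLasso_iff hh, ← adaLasso_le_iff hh]
  constructor <;> rintro ⟨h1, h2⟩ <;> constructor <;> linarith

end Endpoints

section StdCover

/-- The coverage probability `P(|adaLasso h (x + Z) - x| ≤ α)` for `Z ~ N(0, 1)`; `cover` is this
function evaluated at `√n` times its arguments (see `cover_eq_stdCover`). -/
noncomputable def stdCover (h α x : ℝ) : ℝ :=
  stdNormCDF (adaLassoUpper h (x + α) - x) - stdNormCDF (adaLassoLower h (x - α) - x)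

lemma stdCover_le_one (h α x : ℝ) : stdCover h α x ≤ 1 := by
  unfold stdCover
  linarith [stdNormCDF_le_one (adaLassoUpper h (x + α) - x),
    stdNormCDF_nonneg (adaLassoLower h (x - α) - x)]

lemma stdCover_nonneg {h α : ℝ} (hh : 0 ≤ h) (hα : 0 ≤ α) (x : ℝ) : 0 ≤ stdCover h α x :=
  sub_nonneg.2 <| monotone_stdNormCDF <| sub_le_sub_right
    (adaLassoLower_le_adaLassoUpper hh (by linarith)) x

lemma stdCover_neg (h α x : ℝ) : stdCover h α (-x) = stdCover h α x := by
  have hU : adaLassoUpper h (-x + α) - -x = -(adaLassoLower h (x - α) - x) := by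
    rw [adaLassoLower, neg_sub]
    ring_nf
  have hL : adaLassoLower h (-x - α) - -x = -(adaLassoUpper h (x + α) - x) := by
    rw [adaLassoLower, show -(-x - α) = x + α by ring]
    ring
  rw [stdCover, stdCover, hU, hL, stdNormCDF_neg, stdNormCDF_neg]
  ring

lemma two_mul_stdNormCDF_sub_one_le_stdCover {h : ℝ} (hh : 0 ≤ h) (α x : ℝ) :
    2 * stdNormCDF (α - h) - 1 ≤ stdCover h α x := by
  have hU := monotone_stdNormCDF (show α - h ≤ adaLassoUpper h (x + α) - x by
    linarith [sub_le_adaLassoUpper hh (x + α)])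
  have hL := monotone_stdNormCDF (show adaLassoLower h (x - α) - x ≤ -(α - h) by
    linarith [adaLassoLower_le_add hh (x - α)])
  rw [stdNormCDF_neg] at hL
  unfold stdCover
  linarith

lemma stdCover_le_add_of_le {h α x₁ x₂ : ℝ} (hh : 0 ≤ h) (hx₁ : 0 ≤ x₁ + α) (h12 : x₁ ≤ x₂) :
    stdCover h α x₂ ≤ stdCover h α x₁ + (x₂ - x₁) / 2 := by
  have hU := abs_le.1 <| abs_adaLassoUpper_sub_le (h := h) (h' := h) (t := x₂ + α) (t' := x₁ + α)
    (iff_of_true (by linarith) hx₁)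
  rw [sub_self, abs_zero, add_zero, abs_of_nonneg (by linarith)] at hU
  have hL := monotone_adaLassoLower hh (show x₁ - α ≤ x₂ - α by linarith)
  have hUΦ := monotone_stdNormCDF (show adaLassoUpper h (x₂ + α) - x₂
    ≤ adaLassoUpper h (x₁ + α) - x₁ by linarith)
  have hLΦ := stdNormCDF_sub_le_of_sub_le (sub_nonneg.2 h12) (show
    (adaLassoLower h (x₁ - α) - x₁) - (adaLassoLower h (x₂ - α) - x₂) ≤ x₂ - x₁ by linarith)
  unfold stdCover
  linarith

/-- Rescaling `h` and `α` is compensated, up to a Lipschitz error, by shifting `x` so that the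
lower endpoint `x - α` stays fixed; the upper endpoint stays on one branch of `adaLassoUpper`. -/
lemma abs_stdCover_sub_le {h h' α α' x : ℝ} (hα' : 0 ≤ α') (hx : 0 ≤ x)
    (hαα' : |α - α'| ≤ α) :
    |stdCover h' α' x - stdCover h α (x + α - α')| ≤ 2 * |α - α'| + |h - h'| := by
  have hd := abs_le.1 hαα'
  have hU := abs_adaLassoUpper_sub_le (h := h') (h' := h) (t := x + α') (t' := x + α - α' + α)
    (iff_of_true (by linarith) (by linarith))
  have hL := abs_adaLassoLower_sub_le h' h (x - α')
  rw [show x + α' - (x + α - α' + α) = -(2 * (α - α')) by ring, abs_neg, abs_mul, abs_two,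
    abs_sub_comm h'] at hU
  rw [abs_sub_comm h'] at hL
  refine (abs_stdNormCDF_sub_sub_le _ _ _ _).trans ?_
  rw [show x + α - α' - α = x - α' by ring,
    show ∀ u u' : ℝ, u' - x - (u - (x + α - α')) = (u' - u) + (α - α') by intros; ring,
    show ∀ l l' : ℝ, l' - x - (l - (x + α - α')) = (l' - l) + (α - α') by intros; ring]
  linarith [abs_add_le (adaLassoUpper h' (x + α') - adaLassoUpper h (x + α - α' + α)) (α - α'),
    abs_add_le (adaLassoLower h' (x - α') - adaLassoLower h (x - α')) (α - α')]

end StdCover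

section KnownVariance

lemma gaussianReal_map_sqrt_mul_sub {n : ℕ} (hn : n ≠ 0) (θ : ℝ) :
    (gaussianReal θ (n : ℝ≥0)⁻¹).map (fun y => √n * (y - θ)) = gaussianReal 0 1 := by
  have hcomp : (fun y => √n * (y - θ)) = (√n * ·) ∘ (· - θ) := rfl
  rw [hcomp, ← Measure.map_map (by fun_prop) (by fun_prop), gaussianReal_map_sub_const,
    gaussianReal_map_const_mul, sub_self, mul_zero]
  congr
  ext
  simp [Real.sq_sqrt, hn]

lemma measureReal_gaussianReal_Icc {n : ℕ} (hn : n ≠ 0) (θ : ℝ) {L U : ℝ} (hLU : L ≤ U) :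
    (gaussianReal θ (n : ℝ≥0)⁻¹).real (Icc L U)
      = stdNormCDF (√n * (U - θ)) - stdNormCDF (√n * (L - θ)) := by
  have hsn : 0 < √(n : ℝ) := Real.sqrt_pos.2 (by positivity)
  have hpre : (fun y => √n * (y - θ)) ⁻¹' Icc (√n * (L - θ)) (√n * (U - θ)) = Icc L U := by
    ext y
    simp [mul_le_mul_iff_right₀ hsn]
  rw [stdNormCDF_sub_stdNormCDF (by gcongr), ← gaussianReal_map_sqrt_mul_sub hn θ,
    map_measureReal_apply (by fun_prop) measurableSet_Icc, hpre]

lemma gaussianReal_setOf_adaLasso_mem {n : ℕ} (hn : n ≠ 0) {h a : ℝ} (hh : 0 ≤ h) (ha : 0 ≤ a)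
    (θ : ℝ) :
    gaussianReal θ (n : ℝ≥0)⁻¹ {y | adaLasso h y - a ≤ θ ∧ θ ≤ adaLasso h y + a}
      = ENNReal.ofReal (stdCover (√n * h) (√n * a) (√n * θ)) := by
  have hsn : 0 < √(n : ℝ) := Real.sqrt_pos.2 (by positivity)
  rw [setOf_adaLasso_mem_eq_Icc hh, ← ofReal_measureReal,
    measureReal_gaussianReal_Icc hn θ (adaLassoLower_le_adaLassoUpper hh (by linarith)),
    stdCover, ← mul_add, ← mul_sub, adaLassoUpper_mul hsn, adaLassoLower_mul hsn]
  ring_nf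

lemma cover_eq_stdCover {n : ℕ} (hn : n ≠ 0) {h a : ℝ} (hh : 0 ≤ h) (ha : 0 ≤ a) (θ : ℝ) :
    cover n (adaLasso h) a a θ = stdCover (√n * h) (√n * a) (√n * θ) := by
  rw [cover, gaussianReal_setOf_adaLasso_mem hn hh ha, ENNReal.toReal_ofReal
    (stdCover_nonneg (by positivity) (by positivity) _)]

lemma iInf_cover_eq {n : ℕ} (hn : n ≠ 0) {h a : ℝ} (hh : 0 ≤ h) (ha : 0 ≤ a) :
    ⨅ θ, cover n (adaLasso h) a a θ = ⨅ x, stdCover (√n * h) (√n * a) x := by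
  have hsn : √(n : ℝ) ≠ 0 := (Real.sqrt_pos.2 (by positivity)).ne'
  simp_rw [cover_eq_stdCover hn hh ha]
  exact (mul_left_surjective₀ hsn).iInf_comp (stdCover (√n * h) (√n * a))

end KnownVariance

section Gamma

variable {a r : ℝ}

lemma ofReal_mul_gammaPDF (ha : 0 < a) (hr : 0 < r) (x : ℝ) :
    ENNReal.ofReal x * gammaPDF a r x = ENNReal.ofReal (a / r) * gammaPDF (a + 1) r x := by
  rcases lt_or_ge x 0 with hx | hx
  · simp [gammaPDF_of_neg hx]
  rw [gammaPDF_of_nonneg hx, gammaPDF_of_nonneg hx, ← ENNReal.ofReal_mul hx,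
    ← ENNReal.ofReal_mul (by positivity), Real.Gamma_add_one ha.ne', add_sub_cancel_right,
    Real.rpow_add_one hr.ne']
  rcases hx.eq_or_lt with rfl | hx
  · simp [Real.zero_rpow ha.ne']
  have := (Real.Gamma_pos_of_pos ha).ne'
  rw [Real.rpow_sub_one hx.ne']
  congr 1
  field_simp

lemma lintegral_ofReal_mul_gammaMeasure (ha : 0 < a) (hr : 0 < r) {f : ℝ → ℝ≥0∞}
    (hf : Measurable f) :
    ∫⁻ x, ENNReal.ofReal x * f x ∂gammaMeasure a r
      = ENNReal.ofReal (a / r) * ∫⁻ x, f x ∂gammaMeasure (a + 1) r := by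
  have hpdf (b : ℝ) : Measurable (gammaPDF b r) := (measurable_gammaPDFReal b r).ennreal_ofReal
  rw [gammaMeasure, gammaMeasure, lintegral_withDensity_eq_lintegral_mul _ (hpdf a) (by fun_prop),
    lintegral_withDensity_eq_lintegral_mul _ (hpdf _) hf, ← lintegral_const_mul _ (by fun_prop)]
  congr 1 with x
  simp only [Pi.mul_apply]
  rw [← mul_assoc, mul_comm (gammaPDF a r x), ofReal_mul_gammaPDF ha hr, mul_assoc]

lemma lintegral_ofReal_gammaMeasure (ha : 0 < a) (hr : 0 < r) :
    ∫⁻ x, ENNReal.ofReal x ∂gammaMeasure a r = ENNReal.ofReal (a / r) := by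
  have := isProbabilityMeasure_gammaMeasure (by linarith : 0 < a + 1) hr
  simpa using lintegral_ofReal_mul_gammaMeasure ha hr (f := fun _ => 1) measurable_const

lemma ae_nonneg_gammaMeasure : ∀ᵐ x ∂gammaMeasure a r, 0 ≤ x := by
  simp only [ae_iff, not_le]
  change gammaMeasure a r (Iio 0) = 0
  rw [gammaMeasure, withDensity_apply _ measurableSet_Iio]
  exact lintegral_gammaPDF_of_nonpos le_rfl

lemma lintegral_sq_sub_mean_gammaMeasure (ha : 0 < a) (hr : 0 < r) :
    ∫⁻ x, ENNReal.ofReal ((x - a / r) ^ 2) ∂gammaMeasure a r = ENNReal.ofReal (a / r ^ 2) := by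
  have := isProbabilityMeasure_gammaMeasure ha hr
  have := isProbabilityMeasure_gammaMeasure (by linarith : 0 < a + 1) hr
  set m := a / r with hm_def
  have hm : 0 ≤ m := by positivity
  -- `(x - m) ^ 2 = x ^ 2 - 2 m x + m ^ 2` with `2 m x` moved across: `ℝ≥0∞` has no subtraction
  have hsum : ∫⁻ x, ENNReal.ofReal ((x - m) ^ 2) + ENNReal.ofReal x * ENNReal.ofReal (2 * m)
        ∂gammaMeasure a r
      = ∫⁻ x, ENNReal.ofReal x * ENNReal.ofReal x + ENNReal.ofReal (m ^ 2) ∂gammaMeasure a r := by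
    refine lintegral_congr_ae (ae_nonneg_gammaMeasure.mono fun x hx => ?_)
    dsimp only
    rw [← ENNReal.ofReal_mul hx, ← ENNReal.ofReal_mul hx,
      ← ENNReal.ofReal_add (sq_nonneg _) (by positivity),
      ← ENNReal.ofReal_add (by positivity) (by positivity)]
    ring_nf
  rw [lintegral_add_left (by fun_prop), lintegral_add_left (by fun_prop),
    lintegral_ofReal_mul_gammaMeasure ha hr measurable_const,
    lintegral_ofReal_mul_gammaMeasure ha hr ENNReal.measurable_ofReal,
    lintegral_ofReal_gammaMeasure (by linarith) hr, lintegral_const, lintegral_const,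
    measure_univ, measure_univ, mul_one, mul_one, ← ENNReal.ofReal_mul hm,
    ← ENNReal.ofReal_mul hm, ← ENNReal.ofReal_add (by positivity) (by positivity)] at hsum
  rw [← ENNReal.add_left_inj (ENNReal.ofReal_ne_top (r := m * (2 * m))), hsum,
    ← ENNReal.ofReal_add (by positivity) (by positivity)]
  congr 1
  rw [hm_def]
  field_simp
  ring

end Gamma

section SigmaHat

lemma isProbabilityMeasure_sigmaHatLaw {n : ℕ} (hn : 2 ≤ n) :
    IsProbabilityMeasure (sigmaHatLaw n) := by
  have : (2 : ℝ) ≤ n := by exact_mod_cast hn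
  have := isProbabilityMeasure_gammaMeasure (a := ((n : ℝ) - 1) / 2) (by linarith) one_half_pos
  exact Measure.isProbabilityMeasure_map (by fun_prop)

lemma ae_nonneg_sigmaHatLaw (n : ℕ) : ∀ᵐ s ∂sigmaHatLaw n, 0 ≤ s :=
  (ae_map_iff (by fun_prop) measurableSet_Ici).2 (ae_of_all _ fun _ => Real.sqrt_nonneg _)

lemma abs_sqrt_sub_one_le {x : ℝ} (hx : 0 ≤ x) : |√x - 1| ≤ |x - 1| :=
  calc |√x - 1| ≤ |√x - 1| * (√x + 1) :=
        le_mul_of_one_le_right (abs_nonneg _) (by linarith [Real.sqrt_nonneg x])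
    _ = |x - 1| := by
        rw [← abs_of_nonneg (by positivity : 0 ≤ √x + 1), ← abs_mul]
        congr 1
        linear_combination Real.sq_sqrt hx

/-- Chebyshev for `σ̂ ^ 2 = Q / (n - 1)`, `Q ~ χ²_{n-1}`, using `|σ̂ - 1| ≤ |σ̂ ^ 2 - 1|`. -/
lemma measureReal_sigmaHatLaw_le {n : ℕ} (hn : 2 ≤ n) {t : ℝ} (ht : 0 < t) :
    (sigmaHatLaw n).real {s | t < |s - 1|} ≤ 2 / (t ^ 2 * ((n : ℝ) - 1)) := by
  have hn' : (2 : ℝ) ≤ n := by exact_mod_cast hn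
  refine ENNReal.toReal_le_of_le_ofReal (div_nonneg zero_le_two
    (mul_nonneg (sq_nonneg t) (by linarith))) ?_
  rw [sigmaHatLaw,
    Measure.map_apply (by fun_prop) (measurableSet_lt measurable_const (by fun_prop))]
  set m : ℝ := n - 1 with hm_def
  have hm : 0 < m := by linarith
  have hvar := lintegral_sq_sub_mean_gammaMeasure (a := m / 2) (r := 1 / 2) (by positivity)
    one_half_pos
  rw [show m / 2 / (1 / 2) = m by ring, show m / 2 / (1 / 2) ^ 2 = 2 * m by ring] at hvar
  have hsub : (fun q => √(q / m)) ⁻¹' {s | t < |s - 1|} ≤ᵐ[gammaMeasure (m / 2) (1 / 2)]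
      {q | ENNReal.ofReal (t ^ 2 * m ^ 2) ≤ ENNReal.ofReal ((q - m) ^ 2)} := by
    filter_upwards [ae_nonneg_gammaMeasure] with q hq hqt
    have h1 : t * m < |q - m| := by
      have e : |q - m| / m = |q / m - 1| := by rw [div_sub_one hm.ne', abs_div, abs_of_pos hm]
      rw [← lt_div_iff₀ hm, e]
      exact hqt.trans_le (abs_sqrt_sub_one_le (by positivity))
    have h2 := pow_lt_pow_left₀ h1 (by positivity) two_ne_zero
    rw [sq_abs, mul_pow] at h2
    exact ENNReal.ofReal_le_ofReal h2.le
  calc _ ≤ _ := measure_mono_ae hsub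
    _ ≤ (∫⁻ q, ENNReal.ofReal ((q - m) ^ 2) ∂gammaMeasure (m / 2) (1 / 2))
          / ENNReal.ofReal (t ^ 2 * m ^ 2) :=
        meas_ge_le_lintegral_div (by fun_prop) (by simp; positivity) ENNReal.ofReal_ne_top
    _ = ENNReal.ofReal (2 / (t ^ 2 * m)) := by
        rw [hvar, ← ENNReal.ofReal_div_of_pos (by positivity)]
        congr 1
        field_simp

end SigmaHat

section ProbabilityBounds

variable {Ω : Type*} [MeasurableSpace Ω] {ν : Measure Ω} [IsProbabilityMeasure ν] {g : Ω → ℝ}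
  {A : Set Ω}

lemma lintegral_ofReal_le_one (hg : ∀ ω, g ω ≤ 1) : ∫⁻ ω, ENNReal.ofReal (g ω) ∂ν ≤ 1 :=
  (lintegral_mono fun ω => ENNReal.ofReal_le_one.2 (hg ω)).trans_eq (by simp)

lemma sub_measureReal_compl_le_toReal_lintegral (hg : ∀ ω, g ω ≤ 1) (hA : MeasurableSet A)
    {c : ℝ} (hc : c ≤ 1) (hcg : ∀ ω ∈ A, c ≤ g ω) :
    c - ν.real Aᶜ ≤ (∫⁻ ω, ENNReal.ofReal (g ω) ∂ν).toReal := by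
  rcases le_or_gt c 0 with hc0 | hc0
  · linarith [measureReal_nonneg (μ := ν) (s := Aᶜ), ENNReal.toReal_nonneg
      (a := ∫⁻ ω, ENNReal.ofReal (g ω) ∂ν)]
  have hA' : ENNReal.ofReal c * ν A ≤ ∫⁻ ω, ENNReal.ofReal (g ω) ∂ν :=
    calc ENNReal.ofReal c * ν A = ∫⁻ _ in A, ENNReal.ofReal c ∂ν := (setLIntegral_const _ _).symm
      _ ≤ ∫⁻ ω in A, ENNReal.ofReal (g ω) ∂ν :=
        setLIntegral_mono' hA fun ω hω => ENNReal.ofReal_le_ofReal (hcg ω hω)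
      _ ≤ ∫⁻ ω, ENNReal.ofReal (g ω) ∂ν := setLIntegral_le_lintegral _ _
  have := ENNReal.toReal_mono (ne_top_of_le_ne_top ENNReal.one_ne_top
    (lintegral_ofReal_le_one hg)) hA'
  rw [ENNReal.toReal_mul, ENNReal.toReal_ofReal hc0.le, ← measureReal_def] at this
  rw [measureReal_compl hA, probReal_univ]
  nlinarith [measureReal_le_one (μ := ν) (s := A)]

lemma toReal_lintegral_le_add_measureReal_compl (hg : ∀ ω, g ω ≤ 1) (hA : MeasurableSet A)
    {C : ℝ} (hC : 0 ≤ C) (hgC : ∀ ω ∈ A, g ω ≤ C) :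
    (∫⁻ ω, ENNReal.ofReal (g ω) ∂ν).toReal ≤ C + ν.real Aᶜ := by
  have hle : ∫⁻ ω, ENNReal.ofReal (g ω) ∂ν ≤ ENNReal.ofReal C + ν Aᶜ := by
    rw [← lintegral_add_compl _ hA]
    gcongr
    · calc ∫⁻ ω in A, ENNReal.ofReal (g ω) ∂ν ≤ ∫⁻ _ in A, ENNReal.ofReal C ∂ν :=
            setLIntegral_mono' hA fun ω hω => ENNReal.ofReal_le_ofReal (hgC ω hω)
        _ = ENNReal.ofReal C * ν A := setLIntegral_const _ _
        _ ≤ ENNReal.ofReal C := mul_le_of_le_one_right' prob_le_one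
    · calc ∫⁻ ω in Aᶜ, ENNReal.ofReal (g ω) ∂ν ≤ ∫⁻ _ in Aᶜ, 1 ∂ν :=
            lintegral_mono fun ω => ENNReal.ofReal_le_one.2 (hg ω)
        _ = ν Aᶜ := by simp
  calc (∫⁻ ω, ENNReal.ofReal (g ω) ∂ν).toReal ≤ (ENNReal.ofReal C + ν Aᶜ).toReal :=
        ENNReal.toReal_mono (by finiteness) hle
    _ = C + ν.real Aᶜ := by
        rw [ENNReal.toReal_add ENNReal.ofReal_ne_top (measure_ne_top _ _),
          ENNReal.toReal_ofReal hC, measureReal_def]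

end ProbabilityBounds

section StdCoverMix

/-- `stdCover` with threshold and half-length scaled by a random factor `s ~ ν`; `coverUV` is
this average for `ν` the law of `σ̂` (see `coverUV_eq_stdCoverMix`). -/
noncomputable def stdCoverMix (ν : Measure ℝ) (h α x : ℝ) : ℝ :=
  (∫⁻ s, ENNReal.ofReal (stdCover (s * h) (s * α) x) ∂ν).toReal

lemma bddBelow_range_stdCoverMix (ν : Measure ℝ) (h α : ℝ) :
    BddBelow (range (stdCoverMix ν h α)) :=
  ⟨0, forall_mem_range.2 fun _ => ENNReal.toReal_nonneg⟩

lemma measurable_adaLasso : Measurable (Function.uncurry adaLasso) := by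
  change Measurable fun p : ℝ × ℝ => if |p.2| ≤ p.1 then 0 else p.2 - p.1 ^ 2 / p.2
  exact Measurable.ite (measurableSet_le (by fun_prop) (by fun_prop)) measurable_const
    (by fun_prop)

lemma coverUV_eq_stdCoverMix {n : ℕ} (hn : 2 ≤ n) {η a : ℝ} (hη : 0 ≤ η) (ha : 0 ≤ a) (θ : ℝ) :
    coverUV n (fun s y => adaLasso (s * η) y) a θ
      = stdCoverMix (sigmaHatLaw n) (√n * η) (√n * a) (√n * θ) := by
  have := isProbabilityMeasure_sigmaHatLaw hn
  have hmeas : Measurable fun p : ℝ × ℝ => adaLasso (p.2 * η) p.1 :=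
    measurable_adaLasso.comp (f := fun p : ℝ × ℝ => (p.2 * η, p.1)) (by fun_prop)
  have hE : MeasurableSet {p : ℝ × ℝ |
      adaLasso (p.2 * η) p.1 - p.2 * a ≤ θ ∧ θ ≤ adaLasso (p.2 * η) p.1 + p.2 * a} :=
    (measurableSet_le (hmeas.sub (by fun_prop)) measurable_const).inter
      (measurableSet_le measurable_const (hmeas.add (by fun_prop)))
  rw [coverUV, Measure.prod_apply_symm hE]
  refine congrArg ENNReal.toReal
    (lintegral_congr_ae ((ae_nonneg_sigmaHatLaw n).mono fun s hs => ?_))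
  dsimp only
  rw [mul_left_comm s, mul_left_comm s]
  exact gaussianReal_setOf_adaLasso_mem (by omega) (mul_nonneg hs hη) (mul_nonneg hs ha) θ

lemma iInf_coverUV_eq {n : ℕ} (hn : 2 ≤ n) {η a : ℝ} (hη : 0 ≤ η) (ha : 0 ≤ a) :
    ⨅ θ, coverUV n (fun s y => adaLasso (s * η) y) a θ
      = ⨅ x, stdCoverMix (sigmaHatLaw n) (√n * η) (√n * a) x := by
  have hsn : √(n : ℝ) ≠ 0 := (Real.sqrt_pos.2 (by norm_cast; omega)).ne'
  simp_rw [coverUV_eq_stdCoverMix hn hη ha]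
  exact (mul_left_surjective₀ hsn).iInf_comp (stdCoverMix _ (√n * η) (√n * a))

variable {ν : Measure ℝ} [IsProbabilityMeasure ν] {h α : ℝ}

lemma stdCoverMix_le_one (x : ℝ) : stdCoverMix ν h α x ≤ 1 :=
  ENNReal.toReal_le_of_le_ofReal zero_le_one
    (ENNReal.ofReal_one ▸ lintegral_ofReal_le_one fun _ => stdCover_le_one _ _ _)

lemma sub_le_stdCoverMix {x c t : ℝ} (hc : c ≤ 1)
    (hcF : ∀ s, |s - 1| ≤ t → c ≤ stdCover (s * h) (s * α) x) :
    c - ν.real {s | t < |s - 1|} ≤ stdCoverMix ν h α x := by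
  have hA : MeasurableSet {s : ℝ | |s - 1| ≤ t} := measurableSet_le (by fun_prop) measurable_const
  simpa [stdCoverMix, compl_ofPred, not_le] using sub_measureReal_compl_le_toReal_lintegral
    (fun _ => stdCover_le_one _ _ _) hA hc hcF

lemma stdCoverMix_le {x C t : ℝ} (hC : 0 ≤ C)
    (hFC : ∀ s, |s - 1| ≤ t → stdCover (s * h) (s * α) x ≤ C) :
    stdCoverMix ν h α x ≤ C + ν.real {s | t < |s - 1|} := by
  have hA : MeasurableSet {s : ℝ | |s - 1| ≤ t} := measurableSet_le (by fun_prop) measurable_const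
  simpa [stdCoverMix, compl_ofPred, not_le] using toReal_lintegral_le_add_measureReal_compl
    (fun _ => stdCover_le_one _ _ _) hA hC hFC

end StdCoverMix

section Comparison

variable {h α : ℝ}

lemma bddBelow_range_stdCover (hh : 0 ≤ h) (hα : 0 ≤ α) : BddBelow (range (stdCover h α)) :=
  ⟨0, forall_mem_range.2 (stdCover_nonneg hh hα)⟩

lemma stdCover_abs (h α x : ℝ) : stdCover h α |x| = stdCover h α x := by
  rcases abs_choice x with hx | hx <;> rw [hx]
  exact stdCover_neg h α x

lemma abs_sub_mul_self (s y : ℝ) (hy : 0 ≤ y) : |y - s * y| = |s - 1| * y := by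
  rw [show y - s * y = -((s - 1) * y) by ring, abs_neg, abs_mul, abs_of_nonneg hy]

lemma iInf_stdCover_sub_le_stdCover_mul (hh : 0 ≤ h) (hα : 0 ≤ α) {s : ℝ} (hs : |s - 1| ≤ 1)
    (x : ℝ) : (⨅ y, stdCover h α y) - |s - 1| * (2 * α + h) ≤ stdCover (s * h) (s * α) x := by
  wlog hx : 0 ≤ x generalizing x
  · simpa [stdCover_neg] using this (-x) (by linarith)
  have hs0 : 0 ≤ s := by linarith [abs_le.1 hs]
  have hrec := abs_le.1 <| abs_stdCover_sub_le (h := h) (h' := s * h) (mul_nonneg hs0 hα) hx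
    (by rw [abs_sub_mul_self s α hα]; exact mul_le_of_le_one_left hα hs)
  rw [abs_sub_mul_self s α hα, abs_sub_mul_self s h hh] at hrec
  linarith [ciInf_le (bddBelow_range_stdCover hh hα) (x + α - s * α),
    show |s - 1| * (2 * α + h) = 2 * (|s - 1| * α) + |s - 1| * h by ring]

lemma stdCover_mul_le_add (hh : 0 ≤ h) (hα : 0 ≤ α) {s ε : ℝ} (hs : |s - 1| ≤ ε) (hε : ε ≤ 1)
    {x : ℝ} (hx : 0 ≤ x) :
    stdCover (s * h) (s * α) (x + ε * α) ≤ stdCover h α x + ε * (3 * α + h) := by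
  have hε0 : 0 ≤ ε := (abs_nonneg _).trans hs
  have hs0 : 0 ≤ s := by linarith [abs_le.1 (hs.trans hε)]
  have hsα := abs_le.1 (abs_sub_mul_self s α hα ▸ mul_le_mul_of_nonneg_right hs hα)
  have hrec := abs_le.1 <| abs_stdCover_sub_le (h := h) (h' := s * h) (mul_nonneg hs0 hα)
    (x := x + ε * α) (by positivity)
    (by rw [abs_sub_mul_self s α hα]; exact mul_le_of_le_one_left hα (hs.trans hε))
  rw [abs_sub_mul_self s α hα, abs_sub_mul_self s h hh] at hrec
  have hright := stdCover_le_add_of_le hh (α := α) (x₁ := x) (x₂ := x + ε * α + α - s * α)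
    (by linarith) (by linarith)
  nlinarith [mul_le_mul_of_nonneg_right hs hh, mul_le_mul_of_nonneg_right hs hα]

variable (ν : Measure ℝ) [IsProbabilityMeasure ν]

lemma abs_iInf_stdCoverMix_sub_iInf_stdCover_le (hh : 0 ≤ h) (hα : 0 ≤ α) {ε : ℝ} (hε0 : 0 ≤ ε)
    (hε : ε ≤ 1) :
    |(⨅ x, stdCoverMix ν h α x) - ⨅ x, stdCover h α x|
      ≤ ε * (3 * α + h) + ν.real {s | ε < |s - 1|} := by
  set I := ⨅ x, stdCover h α x
  set P := ν.real {s | ε < |s - 1|}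
  have hI1 : I ≤ 1 := (ciInf_le (bddBelow_range_stdCover hh hα) 0).trans (stdCover_le_one _ _ _)
  have hJlow : I - ε * (2 * α + h) - P ≤ ⨅ x, stdCoverMix ν h α x := by
    refine le_ciInf fun x => sub_le_stdCoverMix (by nlinarith) fun s hs => ?_
    refine le_trans ?_ (iInf_stdCover_sub_le_stdCover_mul hh hα (hs.trans hε) x)
    linarith [mul_le_mul_of_nonneg_right hs (by positivity : 0 ≤ 2 * α + h)]
  have hJup : (⨅ x, stdCoverMix ν h α x) - (ε * (3 * α + h) + P) ≤ I := by
    refine le_ciInf fun x => ?_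
    have hJ := ciInf_le (bddBelow_range_stdCoverMix ν h α) (|x| + ε * α)
    have := stdCoverMix_le (ν := ν) (x := |x| + ε * α) (C := stdCover h α x + ε * (3 * α + h))
      (t := ε) (by nlinarith [stdCover_nonneg hh hα x]) fun s hs => stdCover_abs h α x ▸
        stdCover_mul_le_add hh hα hs hε (abs_nonneg x)
    linarith
  have : ε * (2 * α + h) ≤ ε * (3 * α + h) := by nlinarith
  rw [abs_le]
  constructor <;> linarith

lemma abs_iInf_stdCoverMix_sub_iInf_stdCover_le_of_le (hh : 0 ≤ h) (hhα : h ≤ α) :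
    |(⨅ x, stdCoverMix ν h α x) - ⨅ x, stdCover h α x|
      ≤ 2 * (1 - stdNormCDF ((α - h) / 2)) + ν.real {s | 1 / 2 < |s - 1|} := by
  have hα : 0 ≤ α := hh.trans hhα
  have hI := le_ciInf (two_mul_stdNormCDF_sub_one_le_stdCover hh α)
  have hI1 := (ciInf_le (bddBelow_range_stdCover hh hα) 0).trans (stdCover_le_one h α 0)
  have hJ1 := (ciInf_le (bddBelow_range_stdCoverMix ν h α) 0).trans
    (stdCoverMix_le_one (ν := ν) (h := h) (α := α) 0)
  have hJ : 2 * stdNormCDF ((α - h) / 2) - 1 - ν.real {s | 1 / 2 < |s - 1|}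
      ≤ ⨅ x, stdCoverMix ν h α x := by
    refine le_ciInf fun x => sub_le_stdCoverMix (by linarith [stdNormCDF_le_one ((α - h) / 2)])
      fun s hs => ?_
    have hs0 : 1 / 2 ≤ s := by linarith [abs_le.1 hs]
    have := monotone_stdNormCDF (show (α - h) / 2 ≤ s * α - s * h by nlinarith)
    linarith [two_mul_stdNormCDF_sub_one_le_stdCover (by positivity : 0 ≤ s * h) (s * α) x]
  have := monotone_stdNormCDF (show (α - h) / 2 ≤ α - h by linarith)
  rw [abs_le]
  constructor <;> linarith [measureReal_nonneg (μ := ν) (s := {s | 1 / 2 < |s - 1|})]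

end Comparison

section Asymptotics

variable {n : ℕ} {η a : ℝ}

lemma abs_iInf_coverUV_sub_iInf_cover_le (hn : 2 ≤ n) (hη : 0 ≤ η) (ha : 0 ≤ a) {M : ℝ}
    (hM : 1 ≤ M) (hMn : M ≤ √n) :
    |(⨅ θ, coverUV n (fun s y => adaLasso (s * η) y) a θ) - ⨅ θ, cover n (adaLasso η) a a θ|
      ≤ M * (3 * a + η) + 4 / M ^ 2 := by
  have hn' : (2 : ℝ) ≤ n := by exact_mod_cast hn
  have hsn : 0 < √(n : ℝ) := Real.sqrt_pos.2 (by linarith)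
  have := isProbabilityMeasure_sigmaHatLaw hn
  rw [iInf_coverUV_eq hn hη ha, iInf_cover_eq (by omega) hη ha]
  refine (abs_iInf_stdCoverMix_sub_iInf_stdCover_le _ (by positivity) (by positivity)
    (ε := M / √n) (by positivity) ((div_le_one hsn).2 hMn)).trans ?_
  have hP := measureReal_sigmaHatLaw_le hn (t := M / √n) (by positivity)
  have e1 : M / √n * (3 * (√n * a) + √n * η) = M * (3 * a + η) := by field_simp
  have e2 : 2 / ((M / √n) ^ 2 * ((n : ℝ) - 1)) ≤ 4 / M ^ 2 := by
    have : (0 : ℝ) < n - 1 := by linarith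
    rw [div_pow, Real.sq_sqrt (by positivity), div_le_div_iff₀ (by positivity) (by positivity)]
    field_simp
    nlinarith
  linarith

lemma abs_iInf_coverUV_sub_iInf_cover_le_of_le (hn : 2 ≤ n) (hη : 0 ≤ η) (hηa : η ≤ a) :
    |(⨅ θ, coverUV n (fun s y => adaLasso (s * η) y) a θ) - ⨅ θ, cover n (adaLasso η) a a θ|
      ≤ 2 * (1 - stdNormCDF (√n * (a - η) / 2)) + 8 / ((n : ℝ) - 1) := by
  have := isProbabilityMeasure_sigmaHatLaw hn
  rw [iInf_coverUV_eq hn hη (hη.trans hηa), iInf_cover_eq (by omega) hη (hη.trans hηa)]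
  refine (abs_iInf_stdCoverMix_sub_iInf_stdCover_le_of_le _ (by positivity) (by gcongr)).trans ?_
  have hP := measureReal_sigmaHatLaw_le hn (t := 1 / 2) one_half_pos
  rw [show (1 / 2 : ℝ) ^ 2 * ((n : ℝ) - 1) = ((n : ℝ) - 1) / 4 by ring, div_div_eq_mul_div]
    at hP
  rw [← mul_sub]
  linarith [show (2 : ℝ) * 4 = 8 by norm_num]

lemma tendsto_two_mul_one_sub_stdNormCDF_add_div_sub_one {c : ℝ} (hc : 0 < c) :
    Tendsto (fun n : ℕ => 2 * (1 - stdNormCDF (√n * c)) + 8 / ((n : ℝ) - 1)) atTop (𝓝 0) := by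
  have hΦ := tendsto_stdNormCDF_atTop.comp
    ((Real.tendsto_sqrt_atTop.comp tendsto_natCast_atTop_atTop).atTop_mul_const hc)
  have hinv := tendsto_const_nhds (x := (8 : ℝ)).div_atTop
    (tendsto_atTop_add_const_right _ (-1) tendsto_natCast_atTop_atTop)
  simpa [sub_eq_add_neg] using ((tendsto_const_nhds (x := (1 : ℝ)).sub hΦ).const_mul 2).add hinv

end Asymptotics

/-- Theorem 4 (adaptive LASSO): if `η_n → 0`, the infimal coverage probabilities of
`E_{A,n} = [θ̃_A - σ̂ a_n, θ̃_A + σ̂ a_n]` and `C_{A,n} = [θ̂_A - a_n, θ̂_A + a_n]`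
are asymptotically equal. -/
theorem stmt_17 (η : ℕ → ℝ) (hη : ∀ n, 0 < η n) (hη0 : Tendsto η atTop (nhds 0))
    (a : ℕ → ℝ) (ha : ∀ n, 0 ≤ a n) :
    Tendsto (fun n : ℕ =>
        (⨅ θ : ℝ, coverUV n (fun s y => adaLasso (s * η n) y) (a n) θ) -
          (⨅ θ : ℝ, cover n (adaLasso (η n)) (a n) (a n) θ))
      atTop (nhds 0) := by
  refine Metric.tendsto_nhds.2 fun ζ hζ => ?_
  obtain ⟨M, hMζ, hM⟩ : ∃ M : ℝ, 4 / M ^ 2 < ζ / 2 ∧ 1 ≤ M :=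
    (((tendsto_const_nhds.div_atTop (tendsto_pow_atTop two_ne_zero)).eventually
      (gt_mem_nhds (half_pos hζ))).and (eventually_ge_atTop 1)).exists
  obtain ⟨r, hr, hMr⟩ : ∃ r : ℝ, 0 < r ∧ M * (4 * r) = ζ / 2 :=
    ⟨ζ / (8 * M), by positivity, by field_simp; ring⟩
  have hsqrt : Tendsto (fun n : ℕ => √(n : ℝ)) atTop atTop :=
    Real.tendsto_sqrt_atTop.comp tendsto_natCast_atTop_atTop
  filter_upwards [hη0.eventually (eventually_le_nhds (half_pos hr)), eventually_ge_atTop 2,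
    hsqrt.eventually_ge_atTop M,
    (tendsto_two_mul_one_sub_stdNormCDF_add_div_sub_one (by positivity : 0 < r / 4)).eventually
      (gt_mem_nhds hζ)] with n hηn hn hMn hlargen
  rw [Real.dist_eq, sub_zero]
  rcases le_or_gt (a n) r with har | har
  · refine (abs_iInf_coverUV_sub_iInf_cover_le hn (hη n).le (ha n) hM hMn).trans_lt ?_
    have : M * (3 * a n + η n) ≤ M * (4 * r) := by gcongr; linarith
    linarith
  · refine (abs_iInf_coverUV_sub_iInf_cover_le_of_le hn (hη n).le (by linarith)).trans_lt
      (lt_of_le_of_lt ?_ hlargen)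
    have := monotone_stdNormCDF (show √n * (r / 4) ≤ √n * (a n - η n) / 2 by
      rw [mul_div_assoc]; exact mul_le_mul_of_nonneg_left (by linarith) (Real.sqrt_nonneg _))
    linarith
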